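/- arXiv:1111.2090 — 3 statements merged into one kernel-verified Lean document; each statement's English description precedes it below -/
import Mathlib

section
/- Let R be a ring whose right i-profile is linearly ordered, and let I and J be two-sided ideals of R with I ⊆ J(R) and J ⊆ J(R). Then, as right R-modules, either R/I ∈ σ[R/J] or R/J ∈ σ[R/I]. -/
universe u

/-- `M` is `N`-injective. -/
def ModInj (A : Type u) [Ring A] (M : Type u) [AddCommGroup M] [Module A M]
    (N : Type u) [AddCommGroup N] [Module A N] : Prop :=
  ∀ (K : Submodule A N) (f : K →ₗ[A] M), ∃ g : N →ₗ[A] M, ∀ x : K, g x = f x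

/-- `N ∈ σ[M]`. -/
def MemSigma (A : Type u) [Ring A] (M : Type u) [AddCommGroup M] [Module A M]
    (N : Type u) [AddCommGroup N] [Module A N] : Prop :=
  ∃ (ι : Type u) (L : Submodule A (ι →₀ M)) (K : Submodule A ((ι →₀ M) ⧸ L)),
    Nonempty (N ≃ₗ[A] K)

/-- The right i-profile of `R` is linearly ordered: injectivity domains of any two right
`R`-modules are comparable. -/
def IProfileLinear (R : Type u) [Ring R] : Prop :=
  ∀ (M N : Type u) [AddCommGroup M] [Module Rᵐᵒᵖ M] [AddCommGroup N] [Module Rᵐᵒᵖ N],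
    (∀ (X : Type u) [AddCommGroup X] [Module Rᵐᵒᵖ X],
      ModInj Rᵐᵒᵖ M X → ModInj Rᵐᵒᵖ N X) ∨
    (∀ (X : Type u) [AddCommGroup X] [Module Rᵐᵒᵖ X],
      ModInj Rᵐᵒᵖ N X → ModInj Rᵐᵒᵖ M X)

/-- A right ideal of `R` is two-sided. -/
def IsTwoSidedRI (R : Type u) [Ring R] (I : Ideal Rᵐᵒᵖ) : Prop :=
  ∀ x ∈ I, ∀ r : R, x * MulOpposite.op r ∈ I

/-!
Over `S = Rᵐᵒᵖ`, two-sided ideals inside `J(S)` are comparable. If `b ∈ J \ I`, the left ideal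
`(I : b) + J` is proper because `J ⊆ J(S)`; let `q ≠ 0` be the image of `1` in an injective
module `E` containing `S / ((I : b) + J)`, and `W` the `J`-torsion part of `E`. Then `W` is
injective relative to every module killed by `J`, yet not `S/I`-injective, since an extension `g`
of `s b ↦ s q` would give `q = b • g 1 = 0`. If also `a ∈ I \ J`, the symmetric module `W'` is
`S/I`-injective and not `S/J`-injective, while `W` is the other way round, so the injectivity
domains of `W` and `W'` are incomparable. Comparable ideals give the claim, as `S/I` is a
quotient of `S/J` when `J ≤ I`.
-/

open CategoryTheory Module Ideal

section

variable {S : Type u} [Ring S]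

theorem memSigma_of_surjective {M N : Type u} [AddCommGroup M] [Module S M] [AddCommGroup N]
    [Module S N] (f : M →ₗ[S] N) (hf : Function.Surjective f) : MemSigma S M N := by
  let φ := f ∘ₗ (Finsupp.uniqueLinearEquiv S M PUnit.unit.{u + 1}).toLinearMap
  have hφ : Function.Surjective φ := hf.comp (LinearEquiv.surjective _)
  exact ⟨PUnit, LinearMap.ker φ, ⊤,
    ⟨(φ.quotKerEquivOfSurjective hφ).symm.trans Submodule.topEquiv.symm⟩⟩

theorem memSigma_quotient_of_le {I J : Ideal S} (h : J ≤ I) : MemSigma S (S ⧸ J) (S ⧸ I) :=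
  memSigma_of_surjective (Submodule.factor h) (Submodule.factor_surjective h)

theorem isTorsionBySet_quotient_self (I : Ideal S) [I.IsTwoSided] :
    IsTorsionBySet S (S ⧸ I) I :=
  (isTorsionBySet_quotient_iff I I).mpr fun x _ hr => I.mul_mem_right x hr

def torsionByIdeal (J : Ideal S) [J.IsTwoSided] (E : Type*) [AddCommGroup E] [Module S E] :
    Submodule S E where
  carrier := {w | ∀ j ∈ J, j • w = 0}
  add_mem' h₁ h₂ j hj := by rw [smul_add, h₁ j hj, h₂ j hj, add_zero]
  zero_mem' j _ := smul_zero j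
  smul_mem' c w hw j hj := by rw [smul_smul]; exact hw _ (J.mul_mem_right c hj)

theorem modInj_torsionByIdeal (J : Ideal S) [J.IsTwoSided] (E : Type u) [AddCommGroup E]
    [Module S E] [Module.Injective S E] (X : Type u) [AddCommGroup X] [Module S X]
    (hX : IsTorsionBySet S X J) : ModInj S (torsionByIdeal J E) X := by
  intro K f
  obtain ⟨g, hg⟩ := Module.Injective.out K.subtype K.injective_subtype
    ((torsionByIdeal J E).subtype ∘ₗ f)
  have hgJ (x : X) : g x ∈ torsionByIdeal J E := fun j hj => by
    rw [← map_smul, @hX x ⟨j, hj⟩, map_zero]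
  exact ⟨g.codRestrict _ hgJ, fun k => Subtype.ext (hg k)⟩

/-- The map `s • b • m ↦ s • q` extends to some `g : N → W`, forcing `q = b • g m = 0`. -/
theorem eq_zero_of_modInj {N W : Type u} [AddCommGroup N] [Module S N] [AddCommGroup W]
    [Module S W] (hW : ModInj S W N) {b : S} (hb : IsTorsionBy S W b) (m : N) {q : W}
    (hq : ∀ s : S, s • b • m = 0 → s • q = 0) : q = 0 := by
  let ψ := LinearMap.toSpanSingleton S N (b • m)
  have hker : LinearMap.ker ψ ≤ LinearMap.ker (LinearMap.toSpanSingleton S W q) :=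
    fun s hs => hq s hs
  let f := (LinearMap.ker ψ).liftQ _ hker ∘ₗ ψ.quotKerEquivRange.symm.toLinearMap
  obtain ⟨g, hg⟩ := hW _ f
  have hf : f ⟨ψ 1, LinearMap.mem_range_self ψ 1⟩ = q := by
    simp [f, LinearMap.quotKerEquivRange_symm_apply_image]
  calc q = g (ψ 1) := hf ▸ (hg _).symm
    _ = b • g m := by simp [ψ]
    _ = 0 := @hb (g m)

theorem exists_injective_of_ne_top {P : Ideal S} (hP : P ≠ ⊤) :
    ∃ (E : Type u) (_ : AddCommGroup E) (_ : Module S E) (_ : Module.Injective S E) (q : E),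
      q ≠ 0 ∧ ∀ p ∈ P, p • q = 0 := by
  let E : ModuleCat.{u} S := Injective.under (ModuleCat.of S (S ⧸ P))
  let ι : ModuleCat.of S (S ⧸ P) ⟶ E := Injective.ι _
  have hι : Function.Injective ι.hom := (ModuleCat.mono_iff_injective ι).mp inferInstance
  have : Module.Injective S E :=
    Module.injective_module_of_injective_object (inj := Injective.injective_under _) _ _
  refine ⟨E, _, _, this, ι.hom (Submodule.Quotient.mk 1), ?_, fun p hp => ?_⟩
  · rw [ne_eq, ← map_zero ι.hom, hι.eq_iff, Submodule.Quotient.mk_eq_zero]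
    exact (P.ne_top_iff_one).mp hP
  · rw [← map_smul, ← Submodule.Quotient.mk_smul, smul_eq_mul, mul_one,
      (Submodule.Quotient.mk_eq_zero P).mpr hp, map_zero]

/-- The left ideal `(I : b) + J` is proper: from `1 = y + z` with `y b ∈ I` and `z ∈ J(S)`,
the element `y = 1 - z` is left invertible, so `b ∈ I`. -/
theorem comap_toSpanSingleton_sup_ne_top {I J : Ideal S} (hJ : J ≤ jacobson ⊥) {b : S}
    (hb : b ∉ I) : Submodule.comap (LinearMap.toSpanSingleton S S b) I ⊔ J ≠ ⊤ := by
  intro htop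
  obtain ⟨y, hy, z, hz, hyz⟩ := Submodule.mem_sup.mp ((eq_top_iff_one _).mp htop)
  obtain ⟨u, hu⟩ := exists_mul_sub_mem_of_sub_one_mem_jacobson y
    (by simpa [← hyz] using hJ hz)
  rw [mem_bot, sub_eq_zero] at hu
  have : u * (y * b) ∈ I := I.mul_mem_left u hy
  rw [← mul_assoc, hu, one_mul] at this
  exact hb this

theorem exists_modInj_isTorsionBySet_not_modInj_quotient (I J : Ideal S) [J.IsTwoSided]
    (hJ : J ≤ jacobson ⊥) (hJI : ¬ J ≤ I) :
    ∃ (W : Type u) (_ : AddCommGroup W) (_ : Module S W),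
      (∀ (X : Type u) [AddCommGroup X] [Module S X], IsTorsionBySet S X J → ModInj S W X) ∧
        ¬ ModInj S W (S ⧸ I) := by
  obtain ⟨b, hbJ, hbI⟩ := SetLike.not_le_iff_exists.mp hJI
  obtain ⟨E, _, _, _, q, hq0, hqP⟩ :=
    exists_injective_of_ne_top (comap_toSpanSingleton_sup_ne_top hJ hbI)
  refine ⟨torsionByIdeal J E, _, _, modInj_torsionByIdeal J E, fun hW => hq0 ?_⟩
  have hqJ : q ∈ torsionByIdeal J E := fun j hj => hqP j (Submodule.mem_sup_right hj)
  have hqW : (⟨q, hqJ⟩ : torsionByIdeal J E) = 0 := by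
    refine eq_zero_of_modInj hW (fun w => Subtype.ext (w.2 b hbJ)) (Submodule.Quotient.mk 1)
      fun s hs => Subtype.ext (hqP s (Submodule.mem_sup_left ?_))
    simpa [← Submodule.Quotient.mk_smul, Submodule.Quotient.mk_eq_zero] using hs
  exact congrArg Subtype.val hqW

end

theorem IProfileLinear.le_total_of_le_jacobson {R : Type u} [Ring R] (hlin : IProfileLinear R)
    {I J : Ideal Rᵐᵒᵖ} [I.IsTwoSided] [J.IsTwoSided] (hI : I ≤ jacobson ⊥)
    (hJ : J ≤ jacobson ⊥) : J ≤ I ∨ I ≤ J := by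
  by_contra! h
  obtain ⟨W₁, _, _, hW₁, hW₁I⟩ := exists_modInj_isTorsionBySet_not_modInj_quotient I J hJ h.1
  obtain ⟨W₂, _, _, hW₂, hW₂J⟩ := exists_modInj_isTorsionBySet_not_modInj_quotient J I hI h.2
  rcases hlin W₂ W₁ with h₂₁ | h₁₂
  · exact hW₁I (h₂₁ _ (hW₂ _ (isTorsionBySet_quotient_self I)))
  · exact hW₂J (h₁₂ _ (hW₁ _ (isTorsionBySet_quotient_self J)))

theorem IsTwoSidedRI.isTwoSided {R : Type u} [Ring R] {I : Ideal Rᵐᵒᵖ} (hI : IsTwoSidedRI R I) :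
    I.IsTwoSided :=
  ⟨fun b ha => hI _ ha b.unop⟩

/-- if the right i-profile of `R` is linearly ordered and `I, J` are
two-sided ideals contained in `J(R)`, then `R/I ∈ σ[R/J]` or `R/J ∈ σ[R/I]`
(as right `R`-modules). -/
theorem stmt_7 (R : Type u) [Ring R] (hlin : IProfileLinear R)
    (I J : Ideal Rᵐᵒᵖ) (hI2 : IsTwoSidedRI R I) (hJ2 : IsTwoSidedRI R J)
    (hIJac : I ≤ (⊥ : Ideal Rᵐᵒᵖ).jacobson) (hJJac : J ≤ (⊥ : Ideal Rᵐᵒᵖ).jacobson) :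
    MemSigma Rᵐᵒᵖ (Rᵐᵒᵖ ⧸ J) (Rᵐᵒᵖ ⧸ I) ∨ MemSigma Rᵐᵒᵖ (Rᵐᵒᵖ ⧸ I) (Rᵐᵒᵖ ⧸ J) := by
  have := hI2.isTwoSided
  have := hJ2.isTwoSided
  exact (hlin.le_total_of_le_jacobson hIJac hJJac).imp memSigma_quotient_of_le
    memSigma_quotient_of_le
end

section
/- Let R be a right artinian ring that is not semisimple and whose right i-profile is linearly ordered. Then for every right R-module K that is not i-poor, there exists a cyclic right R-module C whose injectivity domain is strictly contained in the injectivity domain of K. -/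
/-!
A module that is not i-poor is `N`-injective for some non-semisimple `N`, hence, since
injectivity domains are closed under submodules, for some non-semisimple cyclic `N`. Over a
right artinian ring such an `N` is artinian, so it contains a non-semisimple submodule `D`
all of whose proper submodules are semisimple. No simple submodule `S` of `D` can be a direct
summand of `D`, so `S` is not `D`-injective. Since `D` lies in the injectivity domain of `K`
but not in that of `S`, linearity of the i-profile forces the domain of the cyclic module `S`
to be strictly contained in that of `K`.
-/

universe u

variable {A : Type u} [Ring A] {M N : Type u} [AddCommGroup M] [Module A M]
  [AddCommGroup N] [Module A N]

theorem modInj_of_isSemisimpleModule [IsSemisimpleModule A N] : ModInj A M N := fun K f ↦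
  have ⟨g, hg⟩ := IsSemisimpleModule.extension_property K.subtype K.injective_subtype f
  ⟨g, fun x ↦ LinearMap.congr_fun hg x⟩

theorem ModInj.of_injective {N' : Type u} [AddCommGroup N'] [Module A N'] (h : ModInj A M N)
    (i : N' →ₗ[A] N) (hi : Function.Injective i) : ModInj A M N' := by
  intro K f
  let e := Submodule.equivMapOfInjective i hi K
  obtain ⟨g, hg⟩ := h (K.map i) (f ∘ₗ e.symm.toLinearMap)
  refine ⟨g ∘ₗ i, fun x ↦ ?_⟩
  simpa [e] using hg (e x)

theorem ModInj.exists_isCompl {p : Submodule A N} (h : ModInj A p N) : ∃ q, IsCompl p q :=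
  have ⟨g, hg⟩ := h p LinearMap.id
  ⟨LinearMap.ker g, LinearMap.isCompl_of_proj hg⟩

theorem exists_modInj_not_isSemisimpleModule
    (hM : ¬ ∀ (N : Type u) [AddCommGroup N] [Module A N],
      ModInj A M N ↔ IsSemisimpleModule A N) :
    ∃ (N : Type u) (_ : AddCommGroup N) (_ : Module A N),
      ModInj A M N ∧ ¬ IsSemisimpleModule A N := by
  contrapose! hM
  exact fun N _ _ ↦ ⟨hM N _ _, fun _ ↦ modInj_of_isSemisimpleModule⟩

theorem exists_span_singleton_not_isSemisimpleModule (hN : ¬ IsSemisimpleModule A N) :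
    ∃ x : N, ¬ IsSemisimpleModule A (Submodule.span A {x}) := by
  contrapose! hN
  refine isSemisimpleModule_of_isSemisimpleModule_submodule' hN ?_
  exact eq_top_iff.2 fun x _ ↦ Submodule.mem_iSup_of_mem x (Submodule.mem_span_singleton_self x)

theorem isSemisimpleModule_of_isCompl {p q : Submodule A N} (hpq : IsCompl p q)
    (hp : IsSemisimpleModule A p) (hq : IsSemisimpleModule A q) : IsSemisimpleModule A N := by
  have := IsSemisimpleModule.sup hp hq
  rw [hpq.sup_eq_top] at this
  exact .congr Submodule.topEquiv.symm

theorem exists_submodule_minimal_not_isSemisimpleModule [IsArtinian A N]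
    (hN : ¬ IsSemisimpleModule A N) :
    ∃ D : Submodule A N, ¬ IsSemisimpleModule A D ∧
      ∀ p : Submodule A D, p ≠ ⊤ → IsSemisimpleModule A p := by
  have htop : ¬ IsSemisimpleModule A (⊤ : Submodule A N) :=
    fun h ↦ hN (.congr Submodule.topEquiv.symm)
  obtain ⟨D, hD, hmin⟩ := IsArtinian.set_has_minimal
    {p : Submodule A N | ¬ IsSemisimpleModule A p} ⟨⊤, htop⟩
  refine ⟨D, hD, fun p hp ↦ ?_⟩
  have hlt : p.map D.subtype < D := by
    simpa [Submodule.map_subtype_top] using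
      (Submodule.map_lt_map_iff_of_injective D.injective_subtype).2 hp.lt_top
  by_contra hps
  exact hmin _ (fun h ↦ hps (.congr (p.equivMapOfInjective _ D.injective_subtype))) hlt

theorem not_modInj_of_isSimpleModule (hN : ¬ IsSemisimpleModule A N)
    (hproper : ∀ p : Submodule A N, p ≠ ⊤ → IsSemisimpleModule A p)
    (S : Submodule A N) [IsSimpleModule A S] : ¬ ModInj A S N := by
  intro h
  obtain ⟨q, hq⟩ := h.exists_isCompl
  have hq_ne_top : q ≠ ⊤ := fun hq_top ↦
    (isSimpleModule_iff_isAtom.1 ‹_›).1 (eq_bot_of_isCompl_top (hq_top ▸ hq))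
  exact hN (isSemisimpleModule_of_isCompl hq inferInstance (hproper q hq_ne_top))

theorem exists_isSimpleModule_not_modInj [IsArtinian A N] (hN : ¬ IsSemisimpleModule A N) :
    ∃ (D : Submodule A N) (S : Submodule A D), IsSimpleModule A S ∧ ¬ ModInj A S D := by
  obtain ⟨D, hD, hproper⟩ := exists_submodule_minimal_not_isSemisimpleModule hN
  have : Nontrivial D := by
    by_contra h
    rw [not_nontrivial_iff_subsingleton] at h
    exact hD (.of_sSup_simples_eq_top (Subsingleton.elim _ _))
  obtain ⟨S, hS⟩ := IsAtomic.exists_atom (Submodule A D)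
  have := isSimpleModule_iff_isAtom.2 hS
  exact ⟨D, S, this, not_modInj_of_isSimpleModule hD hproper S⟩

theorem stmt_8_general (R : Type u) [Ring R] [IsArtinianRing Rᵐᵒᵖ]
    (hlin : IProfileLinear R)
    (K : Type u) [AddCommGroup K] [Module Rᵐᵒᵖ K]
    (hK : ¬ ∀ (N : Type u) [AddCommGroup N] [Module Rᵐᵒᵖ N],
      ModInj Rᵐᵒᵖ K N ↔ IsSemisimpleModule Rᵐᵒᵖ N) :
    ∃ C : ModuleCat.{u} Rᵐᵒᵖ,
      (∃ c : C, Submodule.span Rᵐᵒᵖ {c} = ⊤) ∧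
      (∀ (N : Type u) [AddCommGroup N] [Module Rᵐᵒᵖ N],
        ModInj Rᵐᵒᵖ C N → ModInj Rᵐᵒᵖ K N) ∧
      (∃ N : ModuleCat.{u} Rᵐᵒᵖ, ModInj Rᵐᵒᵖ K N ∧ ¬ ModInj Rᵐᵒᵖ C N) := by
  obtain ⟨N, _, _, hKN, hN⟩ := exists_modInj_not_isSemisimpleModule hK
  obtain ⟨x, hx⟩ := exists_span_singleton_not_isSemisimpleModule hN
  have := isArtinian_span_of_finite Rᵐᵒᵖ (Set.finite_singleton x)
  obtain ⟨D, S, hS, hSD⟩ := exists_isSimpleModule_not_modInj hx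
  have hKD : ModInj Rᵐᵒᵖ K D :=
    (hKN.of_injective _ (Submodule.injective_subtype _)).of_injective _ D.injective_subtype
  have hdom := (hlin K S).resolve_left fun h ↦ hSD (h D hKD)
  have := IsSimpleModule.nontrivial Rᵐᵒᵖ S
  obtain ⟨s, hs⟩ := exists_ne (0 : S)
  exact ⟨ModuleCat.of _ S, ⟨s, IsSimpleModule.span_singleton_eq_top _ hs⟩, hdom,
    ModuleCat.of _ D, hKD, hSD⟩

/-- if `R` is right artinian, not semisimple, and its right i-profile is
linearly ordered, then for every right module `K` that is not i-poor there is a cyclic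
module `C` whose injectivity domain is strictly contained in that of `K`. -/
theorem stmt_8 (R : Type u) [Ring R] [IsArtinianRing Rᵐᵒᵖ]
    (hns : ¬ IsSemisimpleRing Rᵐᵒᵖ) (hlin : IProfileLinear R)
    (K : Type u) [AddCommGroup K] [Module Rᵐᵒᵖ K]
    (hK : ¬ ∀ (N : Type u) [AddCommGroup N] [Module Rᵐᵒᵖ N],
      ModInj Rᵐᵒᵖ K N ↔ IsSemisimpleModule Rᵐᵒᵖ N) :
    ∃ C : ModuleCat.{u} Rᵐᵒᵖ,
      (∃ c : C, Submodule.span Rᵐᵒᵖ {c} = ⊤) ∧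
      (∀ (N : Type u) [AddCommGroup N] [Module Rᵐᵒᵖ N],
        ModInj Rᵐᵒᵖ C N → ModInj Rᵐᵒᵖ K N) ∧
      (∃ N : ModuleCat.{u} Rᵐᵒᵖ, ModInj Rᵐᵒᵖ K N ∧ ¬ ModInj Rᵐᵒᵖ C N) :=
  stmt_8_general R hlin K hK
end

section
/- Let R be a right perfect ring. Then the following are equivalent: (1) R has no right p-middle class; (2) every quasi-projective right R-module that is not semisimple is projective; (3) every two-sided ideal of R contained in J(R) equals 0 or J(R). -/
universe u

/-- `M` is `N`-projective. -/
def ModProj (A : Type u) [Ring A] (M : Type u) [AddCommGroup M] [Module A M]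
    (N : Type u) [AddCommGroup N] [Module A N] : Prop :=
  ∀ (K : Type u) [AddCommGroup K] [Module A K] (g : N →ₗ[A] K),
    Function.Surjective g → ∀ f : M →ₗ[A] K, ∃ h : M →ₗ[A] N, ∀ x : M, g (h x) = f x

/-- A submodule `K ≤ P` is superfluous. -/
def Superfluous (A : Type u) [Ring A] {P : Type u} [AddCommGroup P] [Module A P]
    (K : Submodule A P) : Prop :=
  ∀ L : Submodule A P, K ⊔ L = ⊤ → L = ⊤

/-- `R` is right perfect: every right `R`-module has a projective cover. -/
def RightPerfect (R : Type u) [Ring R] : Prop :=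
  ∀ (M : Type u) [AddCommGroup M] [Module Rᵐᵒᵖ M],
    ∃ (P : ModuleCat.{u} Rᵐᵒᵖ) (p : P →ₗ[Rᵐᵒᵖ] M),
      (∀ (N : Type u) [AddCommGroup N] [Module Rᵐᵒᵖ N], ModProj Rᵐᵒᵖ P N) ∧
      Function.Surjective p ∧ Superfluous Rᵐᵒᵖ (LinearMap.ker p)

/-- `R` has no right p-middle class: every right `R`-module is projective or its
projectivity domain consists precisely of the semisimple modules. -/
def NoRightPMiddleClass (R : Type u) [Ring R] : Prop :=
  ∀ (M : Type u) [AddCommGroup M] [Module Rᵐᵒᵖ M],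
    (∀ (N : Type u) [AddCommGroup N] [Module Rᵐᵒᵖ N], ModProj Rᵐᵒᵖ M N) ∨
    (∀ (N : Type u) [AddCommGroup N] [Module Rᵐᵒᵖ N],
      ModProj Rᵐᵒᵖ M N ↔ IsSemisimpleModule Rᵐᵒᵖ N)

/-!
(1) ⇒ (2) is immediate. For (2) ⇒ (3), let `I ⊆ J` be two-sided: `R/I` is quasi-projective, it is
semisimple only if `I = J` (since `J` annihilates semisimple modules), and it is projective only if
`I = 0` (a splitting of `R → R/I` is onto because `I ⊆ J` is superfluous).

For (3) ⇒ (1), right perfectness yields three facts: `R/J` is semisimple, so a module is semisimple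
iff `J` annihilates it; Nakayama's lemma `N = J N ⇒ N = 0` holds for every module (apply Bass's
lemma `J P ≠ P` for projective `P ≠ 0` to a projective cover); and the kernel `K` of a projective
cover `P → M` lies in `J P`. If `M` is not projective then `K ≠ 0`, so the ideal generated by the
`f(K)`, `f : P → R`, is a nonzero two-sided ideal inside `J`, hence equal to `J`. If moreover `M` is
`N`-projective, a lifting argument gives `g(K) ⊆ J g(K)`, so `g(K) = 0` for every `g : P → N`.
Therefore `J` annihilates `N`, and `N` is semisimple.
-/

section JacobsonRadical

variable {A : Type*} [Ring A]

theorem isUnit_one_sub_of_mem_jacobson {x : A} (hx : x ∈ Ring.jacobson A) : IsUnit (1 - x) := by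
  have left_inv : ∀ y ∈ Ring.jacobson A, ∃ z, z * (1 - y) = 1 := fun y hy ↦ by
    obtain ⟨z, hz⟩ := Ideal.exists_mul_add_sub_mem_of_mem_jacobson (-y) (by
      rw [Ideal.jacobson_bot]; exact neg_mem hy)
    exact ⟨z, by rwa [Ideal.mem_bot, sub_eq_zero, neg_add_eq_sub] at hz⟩
  obtain ⟨z, hz⟩ := left_inv x hx
  -- `z = 1 - -(z * x)` is itself left invertible, and its left inverse must be `1 - x`
  obtain ⟨w, hw⟩ := left_inv (-(z * x)) (neg_mem (Ideal.mul_mem_left _ z hx))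
  have hzx : 1 - -(z * x) = z :=
    calc 1 - -(z * x) = z * (1 - x) + z * x := by rw [hz, sub_neg_eq_add]
      _ = z := by noncomm_ring
  rw [hzx] at hw
  have hw' : w = 1 - x :=
    calc w = w * (z * (1 - x)) := by rw [hz, mul_one]
      _ = 1 - x := by rw [← mul_assoc, hw, one_mul]
  exact ⟨⟨1 - x, z, hw' ▸ hw, hz⟩, rfl⟩

open Matrix in
theorem Matrix.eq_zero_of_vecMul_eq_self {n : Type*} [Fintype n] [DecidableEq n]
    {M : Matrix n n A} (hM : ∀ i j, M i j ∈ Ring.jacobson A) {c : n → A} (hc : c ᵥ* M = c) :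
    c = 0 := by
  have hMJ : M ∈ Ring.jacobson (Matrix n n A) := by
    rw [← Ideal.jacobson_bot, ← Ideal.matrix_bot (n := n)]
    exact Ideal.matrix_jacobson_le ⊥ fun i j ↦ by rw [Ideal.jacobson_bot]; exact hM i j
  obtain ⟨Z, hZ⟩ := (isUnit_one_sub_of_mem_jacobson hMJ).exists_right_inv
  calc c = c ᵥ* ((1 - M) * Z) := by rw [hZ, vecMul_one]
    _ = 0 := by rw [← vecMul_vecMul, vecMul_sub, vecMul_one, hc, sub_self, zero_vecMul]

theorem Finsupp.apply_mem_of_mem_smul_top {ι : Type*} {I : Ideal A} [I.IsTwoSided]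
    {v : ι →₀ A} (hv : v ∈ I • (⊤ : Submodule A (ι →₀ A))) (i : ι) : v i ∈ I := by
  have := Submodule.mem_map_of_mem (f := Finsupp.lapply i) hv
  rw [Submodule.map_smul''] at this
  simpa [Ideal.mul_top] using Submodule.smul_mono le_rfl le_top this

theorem Module.Projective.subsingleton_of_jacobson_smul_top_eq_top {Q : Type*} [AddCommGroup Q]
    [Module A Q] [Module.Projective A Q] (hQ : Ring.jacobson A • (⊤ : Submodule A Q) = ⊤) :
    Subsingleton Q := by
  classical
  obtain ⟨s, hs⟩ := Module.projective_def.mp ‹Module.Projective A Q›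
  have hsJ (y k : Q) : s y k ∈ Ring.jacobson A := by
    have hy := Submodule.mem_map_of_mem (f := s) (hQ.symm ▸ Submodule.mem_top : y ∈ _)
    rw [Submodule.map_smul''] at hy
    exact Finsupp.apply_mem_of_mem_smul_top (Submodule.smul_mono le_rfl le_top hy) k
  suffices hs0 : ∀ x, s x = 0 from
    subsingleton_of_forall_eq 0 fun x ↦ by rw [← hs x, hs0, map_zero]
  intro x
  set w := s x
  -- expanding `x = ∑ w k • k` gives `w = w ᵥ* M` on the support of `w`, where `M k i = s k i ∈ J`
  have hw (i : Q) : w i = ∑ k ∈ w.support, w k * s k i := by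
    have hx : s (Finsupp.linearCombination A id w) = w := congrArg s (hs x)
    conv_lhs => rw [← hx]
    simp [Finsupp.linearCombination_apply, Finsupp.sum, Finsupp.finsetSum_apply]
  have hw0 : (fun k : w.support ↦ w k) = 0 :=
    Matrix.eq_zero_of_vecMul_eq_self (M := fun k i : w.support ↦ s k i) (fun _ _ ↦ hsJ _ _)
      (funext fun i ↦ by
        simp [Matrix.vecMul, dotProduct, hw i, Finset.sum_attach w.support fun k ↦ w k * s k i])
  ext i
  by_cases hi : i ∈ w.support
  · exact congrFun hw0 ⟨i, hi⟩
  · exact Finsupp.notMem_support_iff.mp hi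

theorem isSemisimpleModule_of_le_annihilator (I : Ideal A) [IsSemisimpleModule A (A ⧸ I)]
    {X : Type*} [AddCommGroup X] [Module A X] (hI : I ≤ Module.annihilator A X) :
    IsSemisimpleModule A X := by
  let φ (x : X) : (A ⧸ I) →ₗ[A] X := I.liftQ (LinearMap.toSpanSingleton A X x) fun a ha ↦ by
    simpa using Module.mem_annihilator.mp (hI ha) x
  exact .of_surjective (Finsupp.lsum ℕ φ) fun x ↦
    ⟨Finsupp.single x (Submodule.Quotient.mk 1), by simp [φ]⟩

theorem jacobson_le_of_isSemisimpleModule_quotient (I : Ideal A)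
    [IsSemisimpleModule A (A ⧸ I)] : Ring.jacobson A ≤ I := fun j hj ↦ by
  have := Module.mem_annihilator.mp (IsSemisimpleModule.jacobson_le_annihilator A (A ⧸ I) hj)
    (Submodule.Quotient.mk 1)
  rwa [← Submodule.Quotient.mk_smul, smul_eq_mul, mul_one, Submodule.Quotient.mk_eq_zero] at this

theorem Ideal.le_comap_of_isTwoSided (I : Ideal A) [I.IsTwoSided] (f : A →ₗ[A] A) :
    I ≤ Submodule.comap f I := fun a ha ↦ by
  have hfa : f a = a * f 1 := by rw [← smul_eq_mul, ← map_smul, smul_eq_mul, mul_one]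
  rw [Submodule.mem_comap, hfa]
  exact I.mul_mem_right _ ha

end JacobsonRadical

section Superfluous

variable {A : Type u} [Ring A] {P : Type u} [AddCommGroup P] [Module A P]

theorem Superfluous.le_jacobson {K : Submodule A P} (hK : Superfluous A K) :
    K ≤ Module.jacobson A P :=
  le_sInf fun m hm ↦ by
    by_contra hKm
    exact hm.1 (hK m (sup_comm m K ▸ hm.2 _ (left_lt_sup.mpr hKm)))

theorem superfluous_of_le_jacobson [IsCoatomic (Submodule A P)] {K : Submodule A P}
    (hK : K ≤ Module.jacobson A P) : Superfluous A K := fun L hKL ↦ by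
  obtain hL | ⟨m, hm, hLm⟩ := eq_top_or_exists_le_coatom L
  · exact hL
  · exact absurd (top_le_iff.mp (hKL ▸ sup_le (hK.trans (sInf_le hm)) hLm)) hm.1

theorem Superfluous.eq_top_of_map_eq_top {M : Type u} [AddCommGroup M] [Module A M]
    {p : P →ₗ[A] M} (hK : Superfluous A (LinearMap.ker p)) {L : Submodule A P}
    (hL : L.map p = ⊤) : L = ⊤ :=
  hK L (by rw [sup_comm, ← Submodule.comap_map_eq, hL, Submodule.comap_top])

end Superfluous

section RelativeProjectivity

variable {A : Type u} [Ring A]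

theorem projective_iff_forall_modProj {M : Type u} [AddCommGroup M] [Module A M] :
    Module.Projective A M ↔ ∀ (N : Type u) [AddCommGroup N] [Module A N], ModProj A M N := by
  refine ⟨fun _ N _ _ K _ _ g hg f ↦ ?_, fun h ↦ ?_⟩
  · obtain ⟨h, hh⟩ := Module.projective_lifting_property g f hg
    exact ⟨h, fun x ↦ congr($hh x)⟩
  · obtain ⟨s, hs⟩ := h (M →₀ A) M (Finsupp.linearCombination A id)
      (Finsupp.linearCombination_id_surjective A M) LinearMap.id
    exact Module.projective_def.mpr ⟨s, hs⟩

theorem modProj_of_isSemisimpleModule (M : Type u) {N : Type u} [AddCommGroup M] [Module A M]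
    [AddCommGroup N] [Module A N] [IsSemisimpleModule A N] : ModProj A M N := by
  intro K _ _ g hg f
  obtain ⟨W, hW⟩ := exists_isCompl (LinearMap.ker g)
  let e := g.quotKerEquivOfSurjective hg
  let q := (LinearMap.ker g).quotientEquivOfIsCompl W hW
  have hq : ∀ y, g (q y) = e y := fun y ↦ by
    rw [← LinearMap.quotKerEquivOfSurjective_apply_mk g hg,
      ← Submodule.quotientEquivOfIsCompl_symm_apply _ _ hW, LinearEquiv.symm_apply_apply]
  refine ⟨W.subtype ∘ₗ q.toLinearMap ∘ₗ e.symm.toLinearMap ∘ₗ f, fun x ↦ ?_⟩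
  simp [hq]

theorem modProj_quotient_self (I : Ideal A) [I.IsTwoSided] : ModProj A (A ⧸ I) (A ⧸ I) := by
  intro K _ _ g hg f
  obtain ⟨a, ha⟩ := (hg.comp (Submodule.Quotient.mk_surjective I)) (f (Submodule.Quotient.mk 1))
  -- right multiplication by `a` is well defined on `A ⧸ I` because `I` is two-sided
  refine ⟨I.liftQ (LinearMap.toSpanSingleton A _ (Submodule.Quotient.mk a)) fun i hi ↦ ?_,
    fun x ↦ ?_⟩
  · rw [LinearMap.mem_ker, LinearMap.toSpanSingleton_apply, ← Submodule.Quotient.mk_smul,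
      Submodule.Quotient.mk_eq_zero, smul_eq_mul]
    exact Ideal.mul_mem_right a I hi
  · obtain ⟨x, rfl⟩ := Submodule.Quotient.mk_surjective I x
    simp only [Function.comp_apply] at ha
    rw [Submodule.liftQ_apply, LinearMap.toSpanSingleton_apply, map_smul, ha, ← map_smul,
      ← Submodule.Quotient.mk_smul, smul_eq_mul, mul_one]

theorem eq_bot_of_projective_quotient {I : Ideal A} [Module.Projective A (A ⧸ I)]
    (hI : I ≤ Ring.jacobson A) : I = ⊥ := by
  obtain ⟨s, hs⟩ := I.mkQ.exists_rightInverse_of_surjective I.range_mkQ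
  -- the splitting `s` is onto since `I = ker I.mkQ` is superfluous, so `I.mkQ` is injective
  have hI' : Superfluous A (LinearMap.ker I.mkQ) := by
    rw [Submodule.ker_mkQ]
    exact superfluous_of_le_jacobson hI
  have hs_top : LinearMap.range s = ⊤ := hI'.eq_top_of_map_eq_top <| by
    rw [LinearMap.range_eq_map, ← Submodule.map_comp, hs, Submodule.map_id]
  refine eq_bot_iff.mpr fun a ha ↦ ?_
  obtain ⟨y, rfl⟩ := LinearMap.range_eq_top.mp hs_top a
  have hy : y = 0 := by
    rw [← LinearMap.id_apply (R := A) y, ← hs]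
    exact (Submodule.Quotient.mk_eq_zero I).mpr ha
  simp [hy]

theorem eq_bot_or_eq_jacobson_of_quasiProjective
    (h : ∀ (M : Type u) [AddCommGroup M] [Module A M],
      ModProj A M M → ¬ IsSemisimpleModule A M → Module.Projective A M)
    (I : Ideal A) [I.IsTwoSided] (hI : I ≤ Ring.jacobson A) : I = ⊥ ∨ I = Ring.jacobson A := by
  by_cases hss : IsSemisimpleModule A (A ⧸ I)
  · exact .inr (hI.antisymm (jacobson_le_of_isSemisimpleModule_quotient I))
  · have := h _ (modProj_quotient_self I) hss
    exact .inl (eq_bot_of_projective_quotient hI)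

end RelativeProjectivity

section TraceIdeal

variable {A : Type*} [Ring A] {P : Type*} [AddCommGroup P] [Module A P]

def Submodule.traceIdeal (K : Submodule A P) : Ideal A := ⨆ f : P →ₗ[A] A, K.map f

namespace Submodule

variable (K : Submodule A P)

instance : K.traceIdeal.IsTwoSided := ⟨fun b ha ↦ by
  have hmap : map (LinearMap.toSpanSingleton A A b) K.traceIdeal ≤ K.traceIdeal := by
    rw [traceIdeal, map_iSup]
    exact iSup_le fun f ↦ by
      rw [← map_comp]
      exact le_iSup (fun f ↦ K.map f) (LinearMap.toSpanSingleton A A b ∘ₗ f)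
  simpa using hmap (mem_map_of_mem ha)⟩

theorem traceIdeal_le {I : Ideal A} [I.IsTwoSided] (hK : K ≤ I • ⊤) : K.traceIdeal ≤ I :=
  iSup_le fun f ↦ (map_mono hK).trans <| by
    rw [map_smul'']
    simpa [Ideal.mul_top] using smul_mono (le_refl I) (le_top : map f ⊤ ≤ ⊤)

theorem traceIdeal_ne_bot [Module.Projective A P] (hK : K ≠ ⊥) : K.traceIdeal ≠ ⊥ := by
  obtain ⟨x, hx, hx0⟩ := exists_mem_ne_zero_of_ne_bot hK
  obtain ⟨f, hf⟩ := Module.Projective.exists_dual_ne_zero A hx0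
  intro h
  have hfx : f x ∈ K.traceIdeal := le_iSup (fun f ↦ K.map f) f (mem_map_of_mem hx)
  exact hf (by rwa [h, mem_bot] at hfx)

theorem traceIdeal_le_annihilator {N : Type*} [AddCommGroup N] [Module A N]
    (hK : ∀ ψ : P →ₗ[A] N, K.map ψ = ⊥) : K.traceIdeal ≤ Module.annihilator A N := by
  refine iSup_le fun f ↦ ?_
  rintro _ ⟨k, hk, rfl⟩
  refine Module.mem_annihilator.mpr fun n ↦ ?_
  have := mem_map_of_mem (f := LinearMap.toSpanSingleton A N n ∘ₗ f) hk
  simpa [hK] using this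

end Submodule

end TraceIdeal

namespace RightPerfect

variable {R : Type u} [Ring R]

theorem exists_projectiveCover (hR : RightPerfect R) (M : Type u) [AddCommGroup M]
    [Module Rᵐᵒᵖ M] :
    ∃ (P : Type u) (_ : AddCommGroup P) (_ : Module Rᵐᵒᵖ P) (_ : Module.Projective Rᵐᵒᵖ P)
      (p : P →ₗ[Rᵐᵒᵖ] M), Function.Surjective p ∧ Superfluous Rᵐᵒᵖ (LinearMap.ker p) := by
  obtain ⟨P, p, hP, hp, hK⟩ := hR M
  exact ⟨P, _, _, projective_iff_forall_modProj.mpr hP, p, hp, hK⟩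

theorem subsingleton_of_jacobson_smul_top_eq_top (hR : RightPerfect R) {Z : Type u}
    [AddCommGroup Z] [Module Rᵐᵒᵖ Z] (hZ : Ring.jacobson Rᵐᵒᵖ • (⊤ : Submodule Rᵐᵒᵖ Z) = ⊤) :
    Subsingleton Z := by
  obtain ⟨P, _, _, _, p, hp, hK⟩ := hR.exists_projectiveCover Z
  have : Subsingleton P := Module.Projective.subsingleton_of_jacobson_smul_top_eq_top <|
    hK.eq_top_of_map_eq_top <| by
      rw [Submodule.map_smul'', Submodule.map_top, LinearMap.range_eq_top.mpr hp, hZ]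
  exact hp.subsingleton

theorem eq_bot_of_le_jacobson_smul (hR : RightPerfect R) {Z : Type u} [AddCommGroup Z]
    [Module Rᵐᵒᵖ Z] {N : Submodule Rᵐᵒᵖ Z} (hN : N ≤ Ring.jacobson Rᵐᵒᵖ • N) : N = ⊥ := by
  rw [← Submodule.subsingleton_iff_eq_bot]
  refine hR.subsingleton_of_jacobson_smul_top_eq_top <|
    Submodule.map_injective_of_injective N.injective_subtype ?_
  rw [Submodule.map_smul'', Submodule.map_top, Submodule.range_subtype]
  exact le_antisymm Submodule.smul_le_right hN

theorem exists_isIdempotentElem (hR : RightPerfect R) (B : Submodule Rᵐᵒᵖ Rᵐᵒᵖ) :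
    ∃ π : Module.End Rᵐᵒᵖ Rᵐᵒᵖ, IsIdempotentElem π ∧
      (∀ b ∈ B, π b ∈ Ring.jacobson Rᵐᵒᵖ) ∧ ∀ a, a - π a ∈ B := by
  obtain ⟨P, _, _, _, p, hp, hK⟩ := hR.exists_projectiveCover (Rᵐᵒᵖ ⧸ B)
  obtain ⟨u, hu⟩ := hp (Submodule.Quotient.mk 1)
  set h := LinearMap.toSpanSingleton Rᵐᵒᵖ P u
  have hph : p ∘ₗ h = B.mkQ := LinearMap.ext_ring (by simpa [h] using hu)
  have hh : LinearMap.range h = ⊤ := hK.eq_top_of_map_eq_top <| by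
    rw [LinearMap.range_eq_map, ← Submodule.map_comp, hph, ← LinearMap.range_eq_map,
      Submodule.range_mkQ]
  obtain ⟨s, hs⟩ := h.exists_rightInverse_of_surjective hh
  refine ⟨s ∘ₗ h, ?_, fun b hb ↦ ?_, fun a ↦ ?_⟩
  · rw [IsIdempotentElem, Module.End.mul_eq_comp, LinearMap.comp_assoc,
      ← LinearMap.comp_assoc h, hs, LinearMap.id_comp]
  · have hbK : h b ∈ LinearMap.ker p := by
      simpa [← LinearMap.comp_apply, hph] using hb
    exact Module.map_jacobson_le s (Submodule.mem_map_of_mem (hK.le_jacobson hbK))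
  · have : (p ∘ₗ h) (a - s (h a)) = 0 := by
      simp [← LinearMap.comp_apply h s, hs]
    rwa [hph, Submodule.mkQ_apply, Submodule.Quotient.mk_eq_zero] at this

theorem isSemisimpleModule_quotient_jacobson (hR : RightPerfect R) :
    IsSemisimpleModule Rᵐᵒᵖ (Rᵐᵒᵖ ⧸ Ring.jacobson Rᵐᵒᵖ) := by
  set J := Ring.jacobson Rᵐᵒᵖ
  refine (isSemisimpleModule_iff _ _).mpr ⟨fun S ↦ ?_⟩
  set B := S.comap J.mkQ
  obtain ⟨π, hπ, hπB, hBπ⟩ := hR.exists_isIdempotentElem B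
  have hπJ := J.le_comap_of_isTwoSided π
  have hJB : J ≤ B := fun j hj ↦ by
    change Submodule.Quotient.mk j ∈ S
    rw [(Submodule.Quotient.mk_eq_zero J).mpr hj]
    exact S.zero_mem
  have hS : S = LinearMap.ker (J.mapQ J π hπJ) := by
    ext x
    obtain ⟨a, rfl⟩ := Submodule.Quotient.mk_surjective J x
    rw [LinearMap.mem_ker, Submodule.mapQ_apply, Submodule.Quotient.mk_eq_zero]
    refine ⟨hπB a, fun ha ↦ ?_⟩
    have := B.add_mem (hBπ a) (hJB ha)
    rwa [sub_add_cancel] at this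
  have hπ' : IsIdempotentElem (J.mapQ J π hπJ) := by
    rw [IsIdempotentElem, Module.End.mul_eq_comp, ← Submodule.mapQ_comp]
    congr 1
  exact ⟨_, hS ▸ (LinearMap.IsIdempotentElem.isCompl hπ').symm⟩

theorem isSemisimpleModule_iff (hR : RightPerfect R) {X : Type*} [AddCommGroup X]
    [Module Rᵐᵒᵖ X] :
    IsSemisimpleModule Rᵐᵒᵖ X ↔ Ring.jacobson Rᵐᵒᵖ ≤ Module.annihilator Rᵐᵒᵖ X :=
  ⟨fun _ ↦ IsSemisimpleModule.jacobson_le_annihilator _ _, fun h ↦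
    have := hR.isSemisimpleModule_quotient_jacobson
    isSemisimpleModule_of_le_annihilator _ h⟩

theorem jacobson_le_jacobson_smul_top (hR : RightPerfect R) (M : Type*) [AddCommGroup M]
    [Module Rᵐᵒᵖ M] : Module.jacobson Rᵐᵒᵖ M ≤ Ring.jacobson Rᵐᵒᵖ • ⊤ := by
  refine Module.jacobson_le_of_eq_bot ?_
  have : IsSemisimpleModule Rᵐᵒᵖ (M ⧸ Ring.jacobson Rᵐᵒᵖ • (⊤ : Submodule Rᵐᵒᵖ M)) :=
    hR.isSemisimpleModule_iff.mpr fun j hj ↦ Module.mem_annihilator.mpr fun x ↦ by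
      obtain ⟨x, rfl⟩ := Submodule.Quotient.mk_surjective _ x
      rw [← Submodule.Quotient.mk_smul, Submodule.Quotient.mk_eq_zero]
      exact Submodule.smul_mem_smul hj Submodule.mem_top
  exact IsSemisimpleModule.jacobson_eq_bot _ _

theorem map_ker_eq_bot_of_modProj (hR : RightPerfect R) {P M N : Type u} [AddCommGroup P]
    [Module Rᵐᵒᵖ P] [AddCommGroup M] [Module Rᵐᵒᵖ M] [AddCommGroup N] [Module Rᵐᵒᵖ N]
    {p : P →ₗ[Rᵐᵒᵖ] M} (hp : Function.Surjective p)
    (hK : LinearMap.ker p ≤ Ring.jacobson Rᵐᵒᵖ • ⊤) (hMN : ModProj Rᵐᵒᵖ M N)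
    (ψ : P →ₗ[Rᵐᵒᵖ] N) : (LinearMap.ker p).map ψ = ⊥ := by
  set Z := (LinearMap.ker p).map ψ
  let f : M →ₗ[Rᵐᵒᵖ] N ⧸ Z := (LinearMap.ker p).liftQ (Z.mkQ ∘ₗ ψ) (fun x hx ↦ by
    rw [LinearMap.mem_ker, LinearMap.comp_apply, Submodule.mkQ_apply,
      Submodule.Quotient.mk_eq_zero]
    exact Submodule.mem_map_of_mem hx) ∘ₗ (p.quotKerEquivOfSurjective hp).symm.toLinearMap
  obtain ⟨h, hh⟩ := hMN (N ⧸ Z) Z.mkQ (Submodule.Quotient.mk_surjective Z) f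
  -- `δ = ψ - h ∘ p` agrees with `ψ` on `ker p` and takes values in `Z`, so `Z ≤ J • Z`
  set δ := ψ - h ∘ₗ p
  have hδZ : LinearMap.range δ ≤ Z := by
    rintro _ ⟨x, rfl⟩
    have hfp : f (p x) = Z.mkQ (ψ x) := by
      rw [← LinearMap.quotKerEquivOfSurjective_apply_mk p hp x]
      simp [f]
    rw [← Submodule.Quotient.mk_eq_zero, LinearMap.sub_apply, Submodule.Quotient.mk_sub]
    simp [← Submodule.mkQ_apply, hh, hfp]
  refine hR.eq_bot_of_le_jacobson_smul ?_
  rintro _ ⟨k, hk, rfl⟩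
  have hδk : δ k = ψ k := by simp [δ, LinearMap.mem_ker.mp hk]
  have := Submodule.mem_map_of_mem (f := δ) (hK hk)
  rw [Submodule.map_smul'', Submodule.map_top, hδk] at this
  exact Submodule.smul_mono le_rfl hδZ this

theorem noRightPMiddleClass (hR : RightPerfect R)
    (h : ∀ I : Ideal Rᵐᵒᵖ, I.IsTwoSided → I ≤ Ring.jacobson Rᵐᵒᵖ →
      I = ⊥ ∨ I = Ring.jacobson Rᵐᵒᵖ) :
    NoRightPMiddleClass R := by
  intro M _ _
  obtain ⟨P, _, _, _, p, hp, hK⟩ := hR.exists_projectiveCover M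
  by_cases hK0 : LinearMap.ker p = ⊥
  · have := Module.Projective.of_equiv' (.ofBijective p ⟨LinearMap.ker_eq_bot.mp hK0, hp⟩)
    exact .inl (projective_iff_forall_modProj.mp this)
  refine .inr fun N _ _ ↦ ⟨fun hMN ↦ ?_, fun _ ↦ modProj_of_isSemisimpleModule M⟩
  have hKJ := hK.le_jacobson.trans (hR.jacobson_le_jacobson_smul_top P)
  have hT : (LinearMap.ker p).traceIdeal = Ring.jacobson Rᵐᵒᵖ :=
    (h _ inferInstance (Submodule.traceIdeal_le _ hKJ)).resolve_left
      (Submodule.traceIdeal_ne_bot _ hK0)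
  rw [hR.isSemisimpleModule_iff, ← hT]
  exact Submodule.traceIdeal_le_annihilator _ (hR.map_ker_eq_bot_of_modProj hp hKJ hMN)

end RightPerfect

theorem isTwoSidedRI_iff {R : Type u} [Ring R] (I : Ideal Rᵐᵒᵖ) :
    IsTwoSidedRI R I ↔ I.IsTwoSided :=
  ⟨fun h ↦ ⟨fun b ha ↦ h _ ha b.unop⟩, fun _ _ hx r ↦ I.mul_mem_right (MulOpposite.op r) hx⟩

/-- for a right perfect ring, TFAE: (1) no right p-middle class;
(2) every non-semisimple quasi-projective right module is projective;
(3) every two-sided ideal contained in `J(R)` is `0` or `J(R)`. -/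
theorem stmt_12 (R : Type u) [Ring R] (hperf : RightPerfect R) :
    (NoRightPMiddleClass R ↔
      ∀ (M : Type u) [AddCommGroup M] [Module Rᵐᵒᵖ M],
        ModProj Rᵐᵒᵖ M M → ¬ IsSemisimpleModule Rᵐᵒᵖ M →
          ∀ (N : Type u) [AddCommGroup N] [Module Rᵐᵒᵖ N], ModProj Rᵐᵒᵖ M N) ∧
    (NoRightPMiddleClass R ↔
      ∀ I : Ideal Rᵐᵒᵖ, IsTwoSidedRI R I → I ≤ (⊥ : Ideal Rᵐᵒᵖ).jacobson →
        I = ⊥ ∨ I = (⊥ : Ideal Rᵐᵒᵖ).jacobson) := by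
  simp only [Ideal.jacobson_bot, isTwoSidedRI_iff, ← projective_iff_forall_modProj]
  have h12 : NoRightPMiddleClass R → ∀ (M : Type u) [AddCommGroup M] [Module Rᵐᵒᵖ M],
      ModProj Rᵐᵒᵖ M M → ¬ IsSemisimpleModule Rᵐᵒᵖ M → Module.Projective Rᵐᵒᵖ M :=
    fun h M _ _ hMM hM ↦ projective_iff_forall_modProj.mpr <|
      (h M).elim id fun hdom ↦ absurd ((hdom M).mp hMM) hM
  have h23 := eq_bot_or_eq_jacobson_of_quasiProjective (A := Rᵐᵒᵖ)
  exact ⟨⟨h12, fun h ↦ hperf.noRightPMiddleClass (h23 h)⟩,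
    ⟨fun h ↦ h23 (h12 h), hperf.noRightPMiddleClass⟩⟩
end
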